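/- In the EM algorithm, the observed-data log-likelihood is non-decreasing along iterations: if Θ^{(n+1)} maximizes (or increases) the expected complete-data log-likelihood Q(Θ | Θ^{(n)}) = E[log p(X, Z | Θ) | X, Θ^{(n)}], then log L(Θ^{(n+1)}) ≥ log L(Θ^{(n)}). -/

import Mathlib

/-!
Write `w z = p θ₀ z / L θ₀` for the posterior of the latent variable under `θ₀`. Jensen's
inequality for the concave logarithm, applied to the likelihood ratios `p θ₁ z / p θ₀ z` with
weights `w`, gives `Q(θ₁ | θ₀) - Q(θ₀ | θ₀) ≤ log (∑ z, w z * p θ₁ z / p θ₀ z) = log L θ₁ - log L θ₀`.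
The gap in this inequality is the Kullback–Leibler divergence between the two posteriors.
-/

open Finset Real

theorem Real.sum_mul_log_le_log_sum_mul {ι : Type*} {s : Finset ι} {w x : ι → ℝ}
    (hw : ∀ i ∈ s, 0 ≤ w i) (hw₁ : ∑ i ∈ s, w i = 1) (hx : ∀ i ∈ s, 0 < x i) :
    ∑ i ∈ s, w i * log (x i) ≤ log (∑ i ∈ s, w i * x i) :=
  strictConcaveOn_log_Ioi.concaveOn.le_map_sum hw hw₁ hx

theorem Real.sum_div_sum_mul_log_sub_le_log_sum_sub_log_sum {ι : Type*} {s : Finset ι}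
    (hs : s.Nonempty) {q r : ι → ℝ} (hq : ∀ i ∈ s, 0 < q i) (hr : ∀ i ∈ s, 0 < r i) :
    ∑ i ∈ s, (q i / ∑ j ∈ s, q j) * (log (r i) - log (q i)) ≤
      log (∑ i ∈ s, r i) - log (∑ i ∈ s, q i) := by
  set Sq := ∑ j ∈ s, q j
  have hSq : 0 < Sq := sum_pos hq hs
  have hweights : ∑ i ∈ s, q i / Sq = 1 := by rw [← sum_div, div_self hSq.ne']
  calc ∑ i ∈ s, q i / Sq * (log (r i) - log (q i))
      = ∑ i ∈ s, q i / Sq * log (r i / q i) :=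
        sum_congr rfl fun i hi => by rw [log_div (hr i hi).ne' (hq i hi).ne']
    _ ≤ log (∑ i ∈ s, q i / Sq * (r i / q i)) :=
        sum_mul_log_le_log_sum_mul (fun i hi => (div_pos (hq i hi) hSq).le) hweights
          fun i hi => div_pos (hr i hi) (hq i hi)
    _ = log ((∑ i ∈ s, r i) / Sq) := by
        rw [sum_div]
        exact congrArg log <| sum_congr rfl fun i hi => by field_simp [(hq i hi).ne']
    _ = log (∑ i ∈ s, r i) - log Sq := log_div (sum_pos hr hs).ne' hSq.ne'

/-- Monotonicity of the EM algorithm for a latent-variable model with finitely many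
latent states. Here `p θ z > 0` is the joint density of the observed data together with
the latent value `z` under parameter `θ` (the observed data being fixed),
`L θ = ∑_z p θ z` is the observed-data likelihood, and
`Q(θ | θ') = ∑_z (p θ' z / L θ') log (p θ z)` is the expected complete-data
log-likelihood. If the update `θ₁` increases `Q(· | θ₀)`, i.e. `Q(θ₁ | θ₀) ≥ Q(θ₀ | θ₀)`,
then the observed-data log-likelihood does not decrease: `log L(θ₁) ≥ log L(θ₀)`. -/
theorem em_loglikelihood_nondecreasing
    {Θ : Type*} {Z : Type*} [Fintype Z] [Nonempty Z]
    (p : Θ → Z → ℝ) (hpos : ∀ θ z, 0 < p θ z)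
    (θ₀ θ₁ : Θ)
    (hQ : (∑ z, (p θ₀ z / ∑ z', p θ₀ z') * Real.log (p θ₁ z)) ≥
          (∑ z, (p θ₀ z / ∑ z', p θ₀ z') * Real.log (p θ₀ z))) :
    Real.log (∑ z, p θ₁ z) ≥ Real.log (∑ z, p θ₀ z) := by
  have hgap := sum_div_sum_mul_log_sub_le_log_sum_sub_log_sum univ_nonempty
    (fun z _ => hpos θ₀ z) (fun z _ => hpos θ₁ z)
  simp only [mul_sub, sum_sub_distrib] at hgap
  linarith
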